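/- arXiv:2404.11089 — 2 statements merged into one kernel-verified Lean document; each statement's English description precedes it below -/
import Mathlib

section
/- Let Ω ⊂ ℝⁿ be an open bounded set, let β : ℝ → ℝ be bounded and Lipschitz continuous, set ‖β‖_{W¹_∞} := max{‖β‖_∞, [β]} where [β] is the Lipschitz constant of β, and let ν ∈ [1,2]. Define g_ν(u,p,ω) := (ω·p + β(u)|p|^{2−ν})₋. Then for all u₁, u₂ ∈ L₂(Ω), p₁, p₂ ∈ L₂(Ω, ℝⁿ), and ω₁, ω₂ ∈ L_∞(Ω, ℝⁿ) one has ‖g_ν(u₁,p₁,ω₁) − g_ν(u₂,p₂,ω₂)‖₂ ≤ ‖ω₁‖_∞ ‖p₁ − p₂‖₂ + ‖p₂‖₂ ‖ω₁ − ω₂‖_∞ + 2 ‖β‖_{W¹_∞} ‖p₁‖₂^{2−ν} ‖u₁ − u₂‖₂^{ν−1} + |Ω|^{(ν−1)/2} ‖β‖_∞ ‖p₁ − p₂‖₂^{2−ν}. -/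
/-!
Pointwise, `|A₋ - B₋| ≤ |A - B|`, and `A - B` splits into an inner-product term in
`p₁ - p₂`, one in `ω₁ - ω₂`, the term `(β(u₁) - β(u₂))|p₁|^{2-ν}` and the term
`β(u₂)(|p₁|^{2-ν} - |p₂|^{2-ν})`. Interpolating between boundedness and the Lipschitz bound makes `β` globally `(ν-1)`-Hölder with
constant `2‖β‖_{W¹_∞}`, and `t ↦ t^{2-ν}` is `(2-ν)`-Hölder with constant one. After Minkowski's
inequality the third term is handled by Hölder's inequality with exponents `2/(2-ν)` and `2/(ν-1)`,
the fourth by the embedding `L_{2/(2-ν)}(Ω) ⊂ L₂(Ω)`, which costs `|Ω|^{(ν-1)/2}`.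
-/

open MeasureTheory
open scoped NNReal ENNReal

namespace Real

lemma min_one_le_rpow {t a : ℝ} (ht : 0 ≤ t) (ha₀ : 0 ≤ a) (ha₁ : a ≤ 1) : min 1 t ≤ t ^ a := by
  rcases le_total 1 t with h | h
  · calc min 1 t ≤ 1 := min_le_left _ _
      _ ≤ t ^ a := one_le_rpow h ha₀
  · calc min 1 t ≤ t := min_le_right _ _
      _ = t ^ (1 : ℝ) := (rpow_one t).symm
      _ ≤ t ^ a := rpow_le_rpow_of_exponent_ge' ht h ha₀ ha₁

lemma abs_rpow_sub_rpow_le {x y a : ℝ} (hx : 0 ≤ x) (hy : 0 ≤ y) (ha₀ : 0 ≤ a) (ha₁ : a ≤ 1) :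
    |x ^ a - y ^ a| ≤ |x - y| ^ a := by
  wlog hxy : y ≤ x generalizing x y
  · rw [abs_sub_comm, abs_sub_comm x y]
    exact this hy hx (le_of_not_ge hxy)
  have hsub : x ^ a ≤ (x - y) ^ a + y ^ a := by
    simpa using rpow_add_le_add_rpow (sub_nonneg.2 hxy) hy ha₀ ha₁
  rw [abs_of_nonneg (sub_nonneg.2 (rpow_le_rpow hy hxy ha₀)), abs_of_nonneg (sub_nonneg.2 hxy)]
  linarith

end Real

lemma LipschitzWith.dist_le_two_mul_max_mul_rpow {α E : Type*} [PseudoMetricSpace α]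
    [SeminormedAddCommGroup E] {f : α → E} {M : ℝ} {L : ℝ≥0} (hM : ∀ x, ‖f x‖ ≤ M)
    (hf : LipschitzWith L f) {θ : ℝ} (hθ₀ : 0 ≤ θ) (hθ₁ : θ ≤ 1) (x y : α) :
    dist (f x) (f y) ≤ 2 * max M L * dist x y ^ θ := by
  have hM₀ : 0 ≤ M := (norm_nonneg _).trans (hM x)
  have hbdd : dist (f x) (f y) ≤ 2 * M := by
    linarith [dist_le_norm_add_norm (f x) (f y), hM x, hM y]
  calc dist (f x) (f y) ≤ 2 * max M L * min 1 (dist x y) := by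
        rcases le_total 1 (dist x y) with h | h
        · rw [min_eq_left h, mul_one]
          exact hbdd.trans (by gcongr; exact le_max_left _ _)
        · rw [min_eq_right h]
          calc dist (f x) (f y) ≤ L * dist x y := hf.dist_le_mul x y
            _ ≤ 2 * max M L * dist x y := by
              gcongr
              linarith [le_max_right M (L : ℝ), (NNReal.coe_nonneg L)]
    _ ≤ 2 * max M L * dist x y ^ θ := by
        gcongr
        exact Real.min_one_le_rpow dist_nonneg hθ₀ hθ₁

theorem abs_max_neg_sub_max_neg_le {E : Type*} [NormedAddCommGroup E] [InnerProductSpace ℝ E]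
    {β : ℝ → ℝ} {M K a b : ℝ} (hM : ∀ s, |β s| ≤ M) (hβ : ∀ s t, |β s - β t| ≤ K * |s - t| ^ b)
    (ha₀ : 0 ≤ a) (ha₁ : a ≤ 1) (u₁ u₂ : ℝ) (p₁ p₂ ω₁ ω₂ : E) :
    |max (-(inner ℝ ω₁ p₁ + β u₁ * ‖p₁‖ ^ a)) 0 - max (-(inner ℝ ω₂ p₂ + β u₂ * ‖p₂‖ ^ a)) 0|
      ≤ ‖ω₁‖ * ‖p₁ - p₂‖ + ‖ω₁ - ω₂‖ * ‖p₂‖ + K * (‖p₁‖ ^ a * |u₁ - u₂| ^ b)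
        + M * ‖p₁ - p₂‖ ^ a := by
  have hrpow : |‖p₁‖ ^ a - ‖p₂‖ ^ a| ≤ ‖p₁ - p₂‖ ^ a :=
    (Real.abs_rpow_sub_rpow_le (norm_nonneg _) (norm_nonneg _) ha₀ ha₁).trans
      (Real.rpow_le_rpow (abs_nonneg _) (abs_norm_sub_norm_le _ _) ha₀)
  calc _ ≤ |(inner ℝ ω₁ p₁ + β u₁ * ‖p₁‖ ^ a) - (inner ℝ ω₂ p₂ + β u₂ * ‖p₂‖ ^ a)| :=
        (abs_max_sub_max_le_abs _ _ 0).trans_eq (by rw [neg_sub_neg, abs_sub_comm])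
    _ = |inner ℝ ω₁ (p₁ - p₂) + inner ℝ (ω₁ - ω₂) p₂ + ‖p₁‖ ^ a * (β u₁ - β u₂)
          + β u₂ * (‖p₁‖ ^ a - ‖p₂‖ ^ a)| := by
        rw [inner_sub_right, inner_sub_left]
        ring_nf
    _ ≤ _ := by
        refine (abs_add_le _ _).trans (add_le_add ((abs_add_le _ _).trans
          (add_le_add ((abs_add_le _ _).trans (add_le_add ?_ ?_)) ?_)) ?_)
        · exact abs_real_inner_le_norm _ _
        · exact abs_real_inner_le_norm _ _
        · rw [abs_mul, abs_of_nonneg (by positivity), mul_left_comm]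
          gcongr
          exact hβ _ _
        · rw [abs_mul]
          exact mul_le_mul (hM _) hrpow (abs_nonneg _) ((abs_nonneg _).trans (hM 0))

lemma ENNReal.holderTriple_div_ofReal (p : ℝ≥0∞) {a b : ℝ} (ha : 0 ≤ a) (hb : 0 ≤ b)
    (hab : a + b = 1) : HolderTriple (p / ENNReal.ofReal a) (p / ENNReal.ofReal b) p := by
  constructor
  rcases eq_or_ne p 0 with rfl | hp
  · simp
  rw [ENNReal.inv_div (.inl ofReal_ne_top) (.inr hp),
    ENNReal.inv_div (.inl ofReal_ne_top) (.inr hp), ENNReal.div_add_div_same,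
    ← ofReal_add ha hb, hab, ofReal_one, one_div]

section

variable {α E F : Type*} {m : MeasurableSpace α} {μ : Measure α}
  [NormedAddCommGroup E] [NormedAddCommGroup F]

lemma eLpNorm_norm_rpow_div_le (f : α → E) (p : ℝ≥0∞) {a : ℝ} (ha : 0 ≤ a) :
    eLpNorm (fun x => ‖f x‖ ^ a) (p / ENNReal.ofReal a) μ ≤ eLpNorm f p μ ^ a := by
  rcases ha.eq_or_lt with rfl | ha
  · rcases eq_or_ne p 0 with rfl | hp
    · simp
    · simp only [Real.rpow_zero, ENNReal.ofReal_zero, ENNReal.div_zero hp, ENNReal.rpow_zero]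
      simpa using eLpNorm_le_of_ae_bound (p := ∞) (μ := μ) (C := 1)
        (Filter.Eventually.of_forall fun _ => (norm_one (α := ℝ)).le)
  · rw [eLpNorm_norm_rpow f ha,
      ENNReal.div_mul_cancel (by simpa using ha) ENNReal.ofReal_ne_top]

lemma eLpNorm_norm_rpow_mul_norm_rpow_le {f : α → E} {g : α → F}
    (hf : AEStronglyMeasurable f μ) (hg : AEStronglyMeasurable g μ) (p : ℝ≥0∞) {a b : ℝ}
    (ha : 0 ≤ a) (hb : 0 ≤ b) (hab : a + b = 1) :
    eLpNorm (fun x => ‖f x‖ ^ a * ‖g x‖ ^ b) p μ ≤ eLpNorm f p μ ^ a * eLpNorm g p μ ^ b := by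
  have := ENNReal.holderTriple_div_ofReal p ha hb hab
  calc eLpNorm (fun x => ‖f x‖ ^ a * ‖g x‖ ^ b) p μ
      ≤ eLpNorm (fun x => ‖f x‖ ^ a) (p / ENNReal.ofReal a) μ
        * eLpNorm (fun x => ‖g x‖ ^ b) (p / ENNReal.ofReal b) μ :=
        eLpNorm_smul_le_mul_eLpNorm (φ := fun x => ‖f x‖ ^ a) (f := fun x => ‖g x‖ ^ b)
          (by fun_prop) (by fun_prop)
    _ ≤ eLpNorm f p μ ^ a * eLpNorm g p μ ^ b := by
        gcongr <;> exact eLpNorm_norm_rpow_div_le _ _ ‹_›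

lemma eLpNorm_norm_rpow_le_measure_univ_rpow_mul {f : α → E} (hf : AEStronglyMeasurable f μ)
    (p : ℝ≥0∞) {a b : ℝ} (ha : 0 ≤ a) (hb : 0 ≤ b) (hab : a + b = 1) :
    eLpNorm (fun x => ‖f x‖ ^ a) p μ ≤ μ Set.univ ^ (b / p.toReal) * eLpNorm f p μ ^ a := by
  have hp : p ≤ p / ENNReal.ofReal a := by
    rw [ENNReal.div_eq_inv_mul]
    exact le_mul_of_one_le_left' (ENNReal.one_le_inv.2 (ENNReal.ofReal_le_one.2 (by linarith)))
  calc eLpNorm (fun x => ‖f x‖ ^ a) p μ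
      ≤ eLpNorm (fun x => ‖f x‖ ^ a) (p / ENNReal.ofReal a) μ
        * μ Set.univ ^ (1 / p.toReal - 1 / (p / ENNReal.ofReal a).toReal) :=
        eLpNorm_le_eLpNorm_mul_rpow_measure_univ hp (by fun_prop)
    _ ≤ eLpNorm f p μ ^ a * μ Set.univ ^ (b / p.toReal) := by
        rw [ENNReal.toReal_div, ENNReal.toReal_ofReal ha, one_div_div, ← _root_.sub_div,
          ← eq_sub_of_add_eq' hab]
        gcongr
        exact eLpNorm_norm_rpow_div_le _ _ ha
    _ = _ := mul_comm _ _

lemma eLpNorm_add_add_add_le {f g h k : α → E} (hf : AEStronglyMeasurable f μ)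
    (hg : AEStronglyMeasurable g μ) (hh : AEStronglyMeasurable h μ)
    (hk : AEStronglyMeasurable k μ) {p : ℝ≥0∞} (hp : 1 ≤ p) :
    eLpNorm (fun x => f x + g x + h x + k x) p μ
      ≤ eLpNorm f p μ + eLpNorm g p μ + eLpNorm h p μ + eLpNorm k p μ := by
  refine (eLpNorm_add_le (by fun_prop) hk hp).trans ?_
  gcongr
  refine (eLpNorm_add_le (by fun_prop) hh hp).trans ?_
  gcongr
  exact eLpNorm_add_le hf hg hp

lemma eLpNorm_const_mul_of_nonneg {c : ℝ} (hc : 0 ≤ c) (f : α → ℝ) (p : ℝ≥0∞) :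
    eLpNorm (fun x => c * f x) p μ = ENNReal.ofReal c * eLpNorm f p μ := by
  rw [← Real.enorm_eq_ofReal hc]
  exact eLpNorm_const_smul c f p μ

lemma eLpNorm_norm_mul_norm_le_eLpNorm_top_mul (p : ℝ≥0∞) (f : α → E) {g : α → F}
    (hg : AEStronglyMeasurable g μ) :
    eLpNorm (fun x => ‖f x‖ * ‖g x‖) p μ ≤ eLpNorm f ∞ μ * eLpNorm g p μ := by
  simpa using eLpNorm_le_eLpNorm_top_mul_eLpNorm p f hg (fun a b => ‖a‖ * ‖b‖) 1
    (.of_forall fun _ => by simp [nnnorm_mul])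

end

theorem stmt_3_general {n : ℕ} (Ω : Set (EuclideanSpace ℝ (Fin n)))
    (β : ℝ → ℝ) (hβbdd : BddAbove (Set.range fun s => |β s|))
    (Lβ : NNReal) (hβlip : LipschitzWith Lβ β)
    (ν : ℝ) (hν : ν ∈ Set.Icc (1 : ℝ) 2)
    (u₁ u₂ : EuclideanSpace ℝ (Fin n) → ℝ)
    (p₁ p₂ ω₁ ω₂ : EuclideanSpace ℝ (Fin n) → EuclideanSpace ℝ (Fin n))
    (hu₁ : MemLp u₁ 2 (volume.restrict Ω)) (hu₂ : MemLp u₂ 2 (volume.restrict Ω))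
    (hp₁ : MemLp p₁ 2 (volume.restrict Ω)) (hp₂ : MemLp p₂ 2 (volume.restrict Ω))
    (hω₁ : MemLp ω₁ ⊤ (volume.restrict Ω)) (hω₂ : MemLp ω₂ ⊤ (volume.restrict Ω)) :
    eLpNorm
        (fun x => max (-((inner ℝ (ω₁ x) (p₁ x) : ℝ) + β (u₁ x) * ‖p₁ x‖ ^ (2 - ν))) 0 -
          max (-((inner ℝ (ω₂ x) (p₂ x) : ℝ) + β (u₂ x) * ‖p₂ x‖ ^ (2 - ν))) 0) 2
        (volume.restrict Ω)
      ≤ eLpNorm ω₁ ⊤ (volume.restrict Ω) *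
            eLpNorm (fun x => p₁ x - p₂ x) 2 (volume.restrict Ω) +
          eLpNorm p₂ 2 (volume.restrict Ω) *
            eLpNorm (fun x => ω₁ x - ω₂ x) ⊤ (volume.restrict Ω) +
          2 * ENNReal.ofReal (max (⨆ s, |β s|) (Lβ : ℝ)) *
            eLpNorm p₁ 2 (volume.restrict Ω) ^ (2 - ν) *
            eLpNorm (fun x => u₁ x - u₂ x) 2 (volume.restrict Ω) ^ (ν - 1) +
          volume Ω ^ ((ν - 1) / 2) * ENNReal.ofReal (⨆ s, |β s|) *
            eLpNorm (fun x => p₁ x - p₂ x) 2 (volume.restrict Ω) ^ (2 - ν) := by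
  have ha : 0 ≤ 2 - ν := by linarith [hν.2]
  have hb : 0 ≤ ν - 1 := by linarith [hν.1]
  set μ := volume.restrict Ω
  set M : ℝ := ⨆ s, |β s|
  have hM : ∀ s, |β s| ≤ M := le_ciSup hβbdd
  have hβ : ∀ s t, |β s - β t| ≤ 2 * max M Lβ * |s - t| ^ (ν - 1) := fun s t => by
    simpa only [Real.dist_eq] using
      hβlip.dist_le_two_mul_max_mul_rpow hM hb (by linarith) s t
  have hM₀ : 0 ≤ M := (abs_nonneg _).trans (hM 0)
  have hpt := fun x => abs_max_neg_sub_max_neg_le hM hβ ha (by linarith)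
    (u₁ x) (u₂ x) (p₁ x) (p₂ x) (ω₁ x) (ω₂ x)
  have hu₁m := hu₁.1; have hu₂m := hu₂.1; have hp₁m := hp₁.1
  have hp₂m := hp₂.1; have hω₁m := hω₁.1; have hω₂m := hω₂.1
  have hp : AEStronglyMeasurable (fun x => p₁ x - p₂ x) μ := by fun_prop
  have hu : AEStronglyMeasurable (fun x => u₁ x - u₂ x) μ := by fun_prop
  calc _ ≤ eLpNorm (fun x => ‖ω₁ x‖ * ‖p₁ x - p₂ x‖ + ‖ω₁ x - ω₂ x‖ * ‖p₂ x‖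
          + 2 * max M Lβ * (‖p₁ x‖ ^ (2 - ν) * ‖u₁ x - u₂ x‖ ^ (ν - 1))
          + M * ‖p₁ x - p₂ x‖ ^ (2 - ν)) 2 μ := eLpNorm_mono_real hpt
    _ ≤ _ := by
        refine (eLpNorm_add_add_add_le (by fun_prop) (by fun_prop) (by fun_prop) (by fun_prop)
          one_le_two).trans ?_
        gcongr ?_ + ?_ + ?_ + ?_
        · exact eLpNorm_norm_mul_norm_le_eLpNorm_top_mul _ _ hp
        · exact (eLpNorm_norm_mul_norm_le_eLpNorm_top_mul _ _ hp₂m).trans_eq (mul_comm _ _)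
        · rw [eLpNorm_const_mul_of_nonneg (by positivity), ENNReal.ofReal_mul zero_le_two,
            ENNReal.ofReal_ofNat]
          exact (mul_le_mul_right (eLpNorm_norm_rpow_mul_norm_rpow_le hp₁m hu 2 ha hb (by ring))
            _).trans_eq (mul_assoc _ _ _).symm
        · rw [eLpNorm_const_mul_of_nonneg hM₀, mul_comm _ (ENNReal.ofReal M), mul_assoc]
          gcongr
          simpa [μ] using eLpNorm_norm_rpow_le_measure_univ_rpow_mul hp 2 ha hb (by ring)

/-- For `β : ℝ → ℝ` bounded and Lipschitz with constant `[β]`,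
`‖β‖_{W¹_∞} := max{‖β‖_∞, [β]}`, `ν ∈ [1,2]`, and
`g_ν(u,p,ω) := (ω·p + β(u)|p|^{2−ν})₋`, one has
`‖g_ν(u₁,p₁,ω₁) − g_ν(u₂,p₂,ω₂)‖₂ ≤ ‖ω₁‖_∞‖p₁−p₂‖₂ + ‖p₂‖₂‖ω₁−ω₂‖_∞
  + 2‖β‖_{W¹_∞}‖p₁‖₂^{2−ν}‖u₁−u₂‖₂^{ν−1} + |Ω|^{(ν−1)/2}‖β‖_∞‖p₁−p₂‖₂^{2−ν}`. -/
theorem stmt_3 {n : ℕ} (hn : 1 ≤ n) (Ω : Set (EuclideanSpace ℝ (Fin n)))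
    (hΩopen : IsOpen Ω) (hΩbdd : Bornology.IsBounded Ω)
    (β : ℝ → ℝ) (hβbdd : BddAbove (Set.range fun s => |β s|))
    (Lβ : NNReal) (hβlip : LipschitzWith Lβ β)
    (ν : ℝ) (hν : ν ∈ Set.Icc (1 : ℝ) 2)
    (u₁ u₂ : EuclideanSpace ℝ (Fin n) → ℝ)
    (p₁ p₂ ω₁ ω₂ : EuclideanSpace ℝ (Fin n) → EuclideanSpace ℝ (Fin n))
    (hu₁ : MemLp u₁ 2 (volume.restrict Ω)) (hu₂ : MemLp u₂ 2 (volume.restrict Ω))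
    (hp₁ : MemLp p₁ 2 (volume.restrict Ω)) (hp₂ : MemLp p₂ 2 (volume.restrict Ω))
    (hω₁ : MemLp ω₁ ⊤ (volume.restrict Ω)) (hω₂ : MemLp ω₂ ⊤ (volume.restrict Ω)) :
    eLpNorm
        (fun x => max (-((inner ℝ (ω₁ x) (p₁ x) : ℝ) + β (u₁ x) * ‖p₁ x‖ ^ (2 - ν))) 0 -
          max (-((inner ℝ (ω₂ x) (p₂ x) : ℝ) + β (u₂ x) * ‖p₂ x‖ ^ (2 - ν))) 0) 2
        (volume.restrict Ω)
      ≤ eLpNorm ω₁ ⊤ (volume.restrict Ω) *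
            eLpNorm (fun x => p₁ x - p₂ x) 2 (volume.restrict Ω) +
          eLpNorm p₂ 2 (volume.restrict Ω) *
            eLpNorm (fun x => ω₁ x - ω₂ x) ⊤ (volume.restrict Ω) +
          2 * ENNReal.ofReal (max (⨆ s, |β s|) (Lβ : ℝ)) *
            eLpNorm p₁ 2 (volume.restrict Ω) ^ (2 - ν) *
            eLpNorm (fun x => u₁ x - u₂ x) 2 (volume.restrict Ω) ^ (ν - 1) +
          volume Ω ^ ((ν - 1) / 2) * ENNReal.ofReal (⨆ s, |β s|) *
            eLpNorm (fun x => p₁ x - p₂ x) 2 (volume.restrict Ω) ^ (2 - ν) :=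
  stmt_3_general Ω β hβbdd Lβ hβlip ν hν u₁ u₂ p₁ p₂ ω₁ ω₂ hu₁ hu₂ hp₁ hp₂ hω₁ hω₂
end

section
/- Let Ω ⊂ ℝⁿ be an open bounded set and let p ∈ (0,1). Define f : L₂(Ω) → L₂(Ω) by f(u) := u|u|^{p−1} (pointwise, with f(u)(x) := 0 where u(x) = 0). Then there exists a constant C > 0 (one may take C = 2^{1−p} |Ω|^{(1−p)/2}) such that ‖f(u) − f(v)‖₂ ≤ C ‖u − v‖₂^p for all u, v ∈ L₂(Ω); i.e., f is uniformly p-Hölder continuous on L₂(Ω). -/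
open MeasureTheory

/-!
Pointwise, `φ(a) = sign a · |a|^p` satisfies `|φ a - φ b| ≤ 2^{1-p} |a - b|^p`: for arguments of
the same sign this is the subadditivity of `t ↦ t^p`, for arguments of opposite signs it is the
concavity bound `a^p + b^p ≤ 2^{1-p} (a + b)^p`. Integrating, `‖|w|^p‖₂ = ‖w‖_{2p}^p`, and on a
set of finite measure Hölder's inequality gives `‖w‖_{2p} ≤ |Ω|^{1/(2p) - 1/2} ‖w‖₂`.
-/

/-- The paper's `a |a|^{p-1}`; it vanishes at `0` because `Real.sign 0 = 0`. -/
noncomputable def signedRpow (p a : ℝ) : ℝ := Real.sign a * |a| ^ p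

lemma signedRpow_of_nonneg {p a : ℝ} (hp : p ≠ 0) (ha : 0 ≤ a) : signedRpow p a = a ^ p := by
  rcases ha.eq_or_lt with rfl | ha
  · simp [signedRpow, Real.zero_rpow hp]
  · rw [signedRpow, Real.sign_of_pos ha, abs_of_pos ha, one_mul]

lemma signedRpow_neg (p a : ℝ) : signedRpow p (-a) = -signedRpow p a := by
  rw [signedRpow, signedRpow, abs_neg, Real.sign_neg, neg_mul]

lemma Real.rpow_sub_rpow_le_sub_rpow {p a b : ℝ} (hp0 : 0 ≤ p) (hp1 : p ≤ 1)
    (hb : 0 ≤ b) (hba : b ≤ a) : a ^ p - b ^ p ≤ (a - b) ^ p := by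
  have := Real.rpow_add_le_add_rpow (sub_nonneg.2 hba) hb hp0 hp1
  rw [sub_add_cancel] at this
  linarith

lemma Real.rpow_add_rpow_le_two_rpow_mul {p a b : ℝ} (hp0 : 0 ≤ p) (hp1 : p ≤ 1)
    (ha : 0 ≤ a) (hb : 0 ≤ b) : a ^ p + b ^ p ≤ 2 ^ (1 - p) * (a + b) ^ p := by
  have hmid : 1 / 2 * (a ^ p + b ^ p) ≤ (1 / 2 * (a + b)) ^ p := by
    simpa only [smul_eq_mul, mul_add] using (Real.concaveOn_rpow hp0 hp1).2 ha hb
      (by norm_num : (0 : ℝ) ≤ 1 / 2) (by norm_num : (0 : ℝ) ≤ 1 / 2) (by norm_num)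
  rw [Real.mul_rpow (by norm_num) (by positivity), Real.div_rpow zero_le_one zero_le_two,
    Real.one_rpow] at hmid
  have h2p : (0 : ℝ) < 2 ^ p := by positivity
  rw [Real.rpow_sub zero_lt_two, Real.rpow_one, div_mul_eq_mul_div, le_div_iff₀ h2p]
  rw [one_div_mul_eq_div (2 ^ p), le_div_iff₀ h2p] at hmid
  linarith

lemma abs_signedRpow_sub_le_of_nonneg {p a b : ℝ} (hp0 : 0 < p) (hp1 : p ≤ 1)
    (hb : 0 ≤ b) (hba : b ≤ a) : |signedRpow p a - signedRpow p b| ≤ (a - b) ^ p := by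
  rw [signedRpow_of_nonneg hp0.ne' (hb.trans hba), signedRpow_of_nonneg hp0.ne' hb,
    abs_of_nonneg (sub_nonneg.2 (Real.rpow_le_rpow hb hba hp0.le))]
  exact Real.rpow_sub_rpow_le_sub_rpow hp0.le hp1 hb hba

theorem abs_signedRpow_sub_le {p : ℝ} (hp0 : 0 < p) (hp1 : p ≤ 1) (a b : ℝ) :
    |signedRpow p a - signedRpow p b| ≤ 2 ^ (1 - p) * |a - b| ^ p := by
  wlog hba : b ≤ a generalizing a b
  · rw [abs_sub_comm, abs_sub_comm a]
    exact this b a (le_of_not_ge hba)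
  have hone : (1 : ℝ) ≤ 2 ^ (1 - p) := Real.one_le_rpow one_le_two (by linarith)
  have hpow : 0 ≤ |a - b| ^ p := by positivity
  rw [abs_of_nonneg (sub_nonneg.2 hba)] at hpow ⊢
  rcases le_total 0 b with hb | hb
  · exact (abs_signedRpow_sub_le_of_nonneg hp0 hp1 hb hba).trans (le_mul_of_one_le_left hpow hone)
  rcases le_total a 0 with ha | ha
  · have := abs_signedRpow_sub_le_of_nonneg hp0 hp1 (neg_nonneg.2 ha) (neg_le_neg hba)
    rw [signedRpow_neg, signedRpow_neg, neg_sub_neg, abs_sub_comm, sub_neg_eq_add,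
      neg_add_eq_sub, abs_sub_comm] at this
    exact this.trans (le_mul_of_one_le_left hpow hone)
  · have hsplit : signedRpow p a - signedRpow p b = a ^ p + (-b) ^ p := by
      rw [signedRpow_of_nonneg hp0.ne' ha, ← neg_neg b, signedRpow_neg,
        signedRpow_of_nonneg hp0.ne' (neg_nonneg.2 hb), neg_neg, sub_neg_eq_add]
    have hb' : 0 ≤ -b := neg_nonneg.2 hb
    rw [hsplit, abs_of_nonneg (by positivity), sub_eq_add_neg]
    exact Real.rpow_add_rpow_le_two_rpow_mul hp0.le hp1 ha hb'

section LpEstimates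

variable {α : Type*} [MeasurableSpace α] {μ : Measure α}

-- At `t = 0` both sides are `0` by `x / 0 = 0`; this covers `q = 0` and `q = ∞` below.
lemma rpow_exponent_sub_mul {p t : ℝ} (hp : p ≠ 0) :
    (1 / (t * p) - 1 / t) * p = (1 - p) / t := by
  rcases eq_or_ne t 0 with rfl | ht
  · simp
  · field_simp

theorem eLpNorm_abs_rpow_le {g : α → ℝ} (hg : AEStronglyMeasurable g μ) {p : ℝ}
    (hp0 : 0 < p) (hp1 : p ≤ 1) (q : ENNReal) :
    eLpNorm (fun x => |g x| ^ p) q μ ≤ μ Set.univ ^ ((1 - p) / q.toReal) * eLpNorm g q μ ^ p := by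
  have hq : q * ENNReal.ofReal p ≤ q :=
    mul_le_of_le_one_right' (ENNReal.ofReal_le_one.2 hp1)
  calc eLpNorm (fun x => |g x| ^ p) q μ = eLpNorm g (q * ENNReal.ofReal p) μ ^ p := by
        simpa only [Real.norm_eq_abs] using eLpNorm_norm_rpow g hp0
    _ ≤ (eLpNorm g q μ * μ Set.univ ^ (1 / (q * ENNReal.ofReal p).toReal - 1 / q.toReal)) ^ p :=
        ENNReal.rpow_le_rpow (eLpNorm_le_eLpNorm_mul_rpow_measure_univ hq hg) hp0.le
    _ = μ Set.univ ^ ((1 - p) / q.toReal) * eLpNorm g q μ ^ p := by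
        rw [ENNReal.mul_rpow_of_nonneg _ _ hp0.le, ← ENNReal.rpow_mul, ENNReal.toReal_mul,
          ENNReal.toReal_ofReal hp0.le, rpow_exponent_sub_mul hp0.ne', mul_comm]

theorem eLpNorm_signedRpow_sub_le {p : ℝ} (hp0 : 0 < p) (hp1 : p ≤ 1) {u v : α → ℝ}
    (huv : AEStronglyMeasurable (fun x => u x - v x) μ) (q : ENNReal) :
    eLpNorm (fun x => signedRpow p (u x) - signedRpow p (v x)) q μ
      ≤ ENNReal.ofReal (2 ^ (1 - p)) * μ Set.univ ^ ((1 - p) / q.toReal)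
          * eLpNorm (fun x => u x - v x) q μ ^ p := by
  calc eLpNorm (fun x => signedRpow p (u x) - signedRpow p (v x)) q μ
      ≤ eLpNorm ((2 : ℝ) ^ (1 - p) • fun x => |u x - v x| ^ p) q μ := by
        refine eLpNorm_mono fun x => ?_
        rw [Real.norm_eq_abs, Real.norm_eq_abs, Pi.smul_apply, smul_eq_mul]
        exact (abs_signedRpow_sub_le hp0 hp1 (u x) (v x)).trans (le_abs_self _)
    _ = ENNReal.ofReal (2 ^ (1 - p)) * eLpNorm (fun x => |u x - v x| ^ p) q μ := by
        rw [eLpNorm_const_smul, Real.enorm_of_nonneg (by positivity)]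
    _ ≤ _ := by
        rw [mul_assoc]
        gcongr
        exact eLpNorm_abs_rpow_le huv hp0 hp1 q

end LpEstimates

theorem stmt_13_general {n : ℕ} (Ω : Set (EuclideanSpace ℝ (Fin n)))
    (hΩopen : IsOpen Ω) (hΩbdd : Bornology.IsBounded Ω)
    (p : ℝ) (hp : p ∈ Set.Ioo (0 : ℝ) 1) :
    ∃ C > (0 : ℝ), ∀ u v : EuclideanSpace ℝ (Fin n) → ℝ,
      MemLp u 2 (volume.restrict Ω) → MemLp v 2 (volume.restrict Ω) →
        eLpNorm
            (fun x => Real.sign (u x) * |u x| ^ p - Real.sign (v x) * |v x| ^ p) 2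
            (volume.restrict Ω)
          ≤ ENNReal.ofReal C *
              eLpNorm (fun x => u x - v x) 2 (volume.restrict Ω) ^ p := by
  obtain ⟨hp0, hp1⟩ := hp
  rcases Ω.eq_empty_or_nonempty with rfl | hΩne
  · exact ⟨1, one_pos, fun u v _ _ => by simp⟩
  have hΩfin : volume Ω ≠ ⊤ := hΩbdd.measure_lt_top.ne
  have hΩpos : 0 < (volume Ω).toReal :=
    ENNReal.toReal_pos (hΩopen.measure_ne_zero volume hΩne) hΩfin
  refine ⟨2 ^ (1 - p) * (volume Ω).toReal ^ ((1 - p) / 2), by positivity, fun u v hu hv => ?_⟩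
  have hC : ENNReal.ofReal (2 ^ (1 - p) * (volume Ω).toReal ^ ((1 - p) / 2))
      = ENNReal.ofReal (2 ^ (1 - p)) * volume Ω ^ ((1 - p) / 2) := by
    rw [ENNReal.ofReal_mul (by positivity), ENNReal.toReal_rpow,
      ENNReal.ofReal_toReal (ENNReal.rpow_ne_top_of_nonneg (by linarith) hΩfin)]
  have key := eLpNorm_signedRpow_sub_le hp0 hp1.le (hu.sub hv).aestronglyMeasurable 2
  rw [Measure.restrict_apply_univ, ENNReal.toReal_ofNat] at key
  rwa [hC]

/-- For `p ∈ (0,1)` and `f(u) := u|u|^{p−1} = sign(u)|u|^p`, there is a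
constant `C > 0` such that `‖f(u) − f(v)‖₂ ≤ C ‖u − v‖₂^p` for all `u, v ∈ L₂(Ω)`;
i.e., `f` is uniformly `p`-Hölder continuous on `L₂(Ω)`. -/
theorem stmt_13 {n : ℕ} (hn : 1 ≤ n) (Ω : Set (EuclideanSpace ℝ (Fin n)))
    (hΩopen : IsOpen Ω) (hΩbdd : Bornology.IsBounded Ω)
    (p : ℝ) (hp : p ∈ Set.Ioo (0 : ℝ) 1) :
    ∃ C > (0 : ℝ), ∀ u v : EuclideanSpace ℝ (Fin n) → ℝ,
      MemLp u 2 (volume.restrict Ω) → MemLp v 2 (volume.restrict Ω) →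
        eLpNorm
            (fun x => Real.sign (u x) * |u x| ^ p - Real.sign (v x) * |v x| ^ p) 2
            (volume.restrict Ω)
          ≤ ENNReal.ofReal C *
              eLpNorm (fun x => u x - v x) 2 (volume.restrict Ω) ^ p :=
  stmt_13_general Ω hΩopen hΩbdd p hp
end
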